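/- arXiv:2504.01993 — 2 statements merged into one kernel-verified Lean document; each statement's English description precedes it below -/
import Mathlib

section
/- Fix partitions λ, μ and k ∈ ℕ. The sequence of reduced Kronecker coefficients (ḡ_{λ[n], μ, (n−k)})_n is independent of n for all n ≥ |λ| + |μ|. -/
/-- A partition: a weakly decreasing, eventually-zero sequence of naturals.
`parts 0` is the largest part `λ₁`, `parts 1` is `λ₂`, and so on. -/
structure KPartition where
  parts : ℕ → ℕ
  antitone : ∀ ⦃i j : ℕ⦄, i ≤ j → parts j ≤ parts i
  eventually_zero : ∃ N, ∀ i, N ≤ i → parts i = 0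

namespace KPartition

/-- The size `|λ|` of a partition: the sum of its parts. -/
noncomputable def size (l : KPartition) : ℕ := ∑ᶠ i, l.parts i

/-- Containment of Young diagrams: `l ⊆ m`. -/
def Subdiag (l m : KPartition) : Prop := ∀ i, l.parts i ≤ m.parts i

/-- `m / l` is a horizontal strip: `l ⊆ m` and no two boxes of `m / l`
lie in the same column. -/
def IsHorizontalStrip (l m : KPartition) : Prop :=
  Subdiag l m ∧ ∀ i, m.parts (i + 1) ≤ l.parts i

/-- `ν = l[n] = (n - |l|, l₁, l₂, …)`: the padded partition. -/
def IsPad (l : KPartition) (n : ℕ) (ν : KPartition) : Prop :=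
  ν.parts 0 + l.size = n ∧ ∀ i, ν.parts (i + 1) = l.parts i

/-- The one-row partition `(k)`. -/
def row (k : ℕ) : KPartition where
  parts i := if i = 0 then k else 0
  antitone := by
    intro i j hij
    by_cases hj : j = 0
    · have hi : i = 0 := Nat.le_zero.mp (hj ▸ hij)
      simp [hi, hj]
    · simp [hj]
  eventually_zero := ⟨1, fun i hi => by simp [show i ≠ 0 by omega]⟩

open Classical in
/-- The Pieri coefficient `c^ν_{l,(m)}` (the Littlewood–Richardson coefficient
with one-row second factor): it is `1` if `ν / l` is a horizontal strip of
size `m`, and `0` otherwise, by Pieri's rule. -/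
noncomputable def pieri (l : KPartition) (m : ℕ) (ν : KPartition) : ℕ :=
  if IsHorizontalStrip l ν ∧ ν.size = l.size + m then 1 else 0

/-- The iterated Littlewood–Richardson coefficient
`c^l_{π,α,(k)} = Σ_ξ c^l_{π,ξ} c^ξ_{α,(k)}`, given a general
Littlewood–Richardson coefficient function `lr`, where `lr a b c = c^c_{a,b}`. -/
noncomputable def iterLR (lr : KPartition → KPartition → KPartition → ℕ)
    (π α : KPartition) (k : ℕ) (l : KPartition) : ℕ :=
  ∑ᶠ ξ : KPartition, lr π ξ l * pieri α k ξ

/-- The iterated Littlewood–Richardson coefficient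
`c^l_{α,β,π} = Σ_ξ c^l_{α,ξ} c^ξ_{β,π}` with three partition arguments. -/
noncomputable def tripleLR (lr : KPartition → KPartition → KPartition → ℕ)
    (α β π : KPartition) (l : KPartition) : ℕ :=
  ∑ᶠ ξ : KPartition, lr α ξ l * lr β π ξ

end KPartition

/-!
In the Bowman–De Visscher–Orellana sum for `ḡ_{λ[n],μ,(n-k)}`, degree counting forces
`k₁ = n - |π| - |α|`. Pushing the row factor inside,
`c^{λ[n]}_{π,α,(k₁)} = Σ_ξ c^{λ[n]}_{ξ,(k₁)} c^ξ_{π,α}` with `|ξ| = |π| + |α| ≤ n - |λ|`,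
and for such `ξ` the skew shape `λ[n] / ξ` is a horizontal strip exactly when `ξ / λ` is one.
Hence every surviving term is independent of `n`.
-/

namespace KPartition

def LRHomogeneous (lr : KPartition → KPartition → KPartition → ℕ) : Prop :=
  ∀ a b c : KPartition, lr a b c ≠ 0 → a.size + b.size = c.size

lemma size_eq_sum_range (p : KPartition) {N : ℕ} (h : ∀ i, N ≤ i → p.parts i = 0) :
    p.size = ∑ i ∈ Finset.range N, p.parts i := by
  refine finsum_eq_finsetSum_of_support_subset _ fun i hi => ?_
  simp only [Function.mem_support, Finset.coe_range, Set.mem_Iio] at hi ⊢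
  by_contra hN
  exact hi (h i (not_lt.mp hN))

lemma parts_zero_le_size (p : KPartition) : p.parts 0 ≤ p.size := by
  obtain ⟨N, hN⟩ := p.eventually_zero
  rw [size_eq_sum_range p (N := N + 1) fun i hi => hN i (by omega)]
  exact Finset.single_le_sum (fun i _ => Nat.zero_le _) (Finset.mem_range.mpr (by omega))

lemma IsPad.size_eq {l ν : KPartition} {n : ℕ} (h : IsPad l n ν) : ν.size = n := by
  obtain ⟨M, hM⟩ := l.eventually_zero
  have hν : ∀ i, M + 1 ≤ i → ν.parts i = 0 := by
    rintro (_ | j) hj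
    · omega
    · rw [h.2]
      exact hM j (by omega)
  rw [size_eq_sum_range ν hν, Finset.sum_range_succ', Finset.sum_congr rfl fun i _ => h.2 i,
    ← size_eq_sum_range l hM, add_comm, h.1]

lemma IsPad.isHorizontalStrip_iff {l ν ξ : KPartition} {n : ℕ} (hν : IsPad l n ν)
    (hξ : ξ.parts 0 + l.size ≤ n) :
    IsHorizontalStrip ξ ν ↔ IsHorizontalStrip l ξ := by
  constructor
  · rintro ⟨hsub, hrow⟩
    exact ⟨fun i => hν.2 i ▸ hrow i, fun i => hν.2 i ▸ hsub (i + 1)⟩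
  · rintro ⟨hsub, hrow⟩
    refine ⟨fun i => ?_, fun i => hν.2 i ▸ hsub i⟩
    cases i with
    | zero => have := hν.1; omega
    | succ j => rw [hν.2 j]; exact hrow j

open Classical in
lemma IsPad.pieri_sub_size {l ν ξ : KPartition} {n : ℕ} (hν : IsPad l n ν)
    (hξ : ξ.size + l.size ≤ n) :
    pieri ξ (n - ξ.size) ν = if IsHorizontalStrip l ξ then 1 else 0 := by
  have := parts_zero_le_size ξ
  unfold pieri
  rw [hν.size_eq, Nat.add_sub_cancel' (by omega), hν.isHorizontalStrip_iff (by omega)]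
  simp

section

variable {lr : KPartition → KPartition → KPartition → ℕ}

lemma size_add_size_add_eq_of_iterLR_ne_zero (hlr : LRHomogeneous lr)
    {π α a : KPartition} {k : ℕ} (h : iterLR lr π α k a ≠ 0) :
    π.size + α.size + k = a.size := by
  obtain ⟨ξ, hξ⟩ : ∃ ξ, lr π ξ a * pieri α k ξ ≠ 0 := by
    by_contra! hzero
    exact h (finsum_eq_zero_of_forall_eq_zero hzero)
  have hξsize : ξ.size = α.size + k := by
    unfold pieri at hξ
    split_ifs at hξ with hstrip
    · exact hstrip.2
    · simp at hξ
  have := hlr _ _ _ (left_ne_zero_of_mul hξ)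
  omega

lemma finsum_finsum_ite_iterLR_mul (hlr : LRHomogeneous lr) (π α a b : KPartition) (m : ℕ) :
    (∑ᶠ k₁ : ℕ, ∑ᶠ k₂ : ℕ,
        if k₁ + k₂ + π.size = m then iterLR lr π α k₁ a * iterLR lr π α k₂ b else 0) =
      ∑ᶠ k₂ : ℕ, if a.size - (π.size + α.size) + k₂ + π.size = m then
        iterLR lr π α (a.size - (π.size + α.size)) a * iterLR lr π α k₂ b else 0 := by
  refine finsum_eq_single _ _ fun k₁ hk₁ => finsum_eq_zero_of_forall_eq_zero fun k₂ => ?_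
  by_cases hz : iterLR lr π α k₁ a = 0
  · simp [hz]
  · have := size_add_size_add_eq_of_iterLR_ne_zero hlr hz
    omega

open Classical in
lemma IsPad.iterLR_sub_size (hlr : LRHomogeneous lr)
    (hcomm : ∀ (π α : KPartition) (k : ℕ) (a : KPartition),
      iterLR lr π α k a = ∑ᶠ ξ : KPartition, pieri ξ k a * lr π α ξ)
    {l ν : KPartition} {n : ℕ} (hν : IsPad l n ν) (π α : KPartition)
    (hn : π.size + α.size + l.size ≤ n) :
    iterLR lr π α (n - (π.size + α.size)) ν =
      ∑ᶠ ξ : KPartition, (if IsHorizontalStrip l ξ then 1 else 0) * lr π α ξ := by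
  rw [hcomm]
  refine finsum_congr fun ξ => ?_
  by_cases hz : lr π α ξ = 0
  · simp [hz]
  · rw [hlr _ _ _ hz, hν.pieri_sub_size (by rw [← hlr _ _ _ hz]; omega)]

end

end KPartition

open KPartition in
/-- Proposition (Kroneckerstab): for fixed partitions `λ, μ` and `k ∈ ℕ`, the
sequence of reduced Kronecker coefficients `ḡ_{λ[n],μ,(n-k)}` is independent of
`n` for `n ≥ |λ| + |μ|`. Here `gbar` is the reduced Kronecker coefficient and
`lr` the Littlewood–Richardson coefficient, assumed to satisfy the
Bowman–De Visscher–Orellana formula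
`ḡ_{λ,μ,(k)} = Σ_{α,π,k₁+k₂+|π|=k} c^λ_{π,α,(k₁)} c^μ_{π,α,(k₂)}`. -/
theorem stmt5 (gbar lr : KPartition → KPartition → KPartition → ℕ)
    (Hdeg : ∀ a b c : KPartition, lr a b c ≠ 0 → a.size + b.size = c.size)
    (Hbracket : ∀ (π α : KPartition) (k : ℕ) (a : KPartition),
      iterLR lr π α k a = ∑ᶠ ξ : KPartition, pieri ξ k a * lr π α ξ)
    (Hformula : ∀ (a b : KPartition) (k : ℕ),
      gbar a b (row k) =
        ∑ᶠ π : KPartition, ∑ᶠ α : KPartition, ∑ᶠ k₁ : ℕ, ∑ᶠ k₂ : ℕ,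
          (if k₁ + k₂ + π.size = k then
            iterLR lr π α k₁ a * iterLR lr π α k₂ b else 0))
    (l μ : KPartition) (k : ℕ) :
    ∀ n₁ n₂ : ℕ, l.size + μ.size ≤ n₁ → l.size + μ.size ≤ n₂ →
      l.size + l.parts 0 ≤ n₁ → l.size + l.parts 0 ≤ n₂ → k ≤ n₁ → k ≤ n₂ →
      ∀ ν₁ ν₂ : KPartition, IsPad l n₁ ν₁ → IsPad l n₂ ν₂ →
        gbar ν₁ μ (row (n₁ - k)) = gbar ν₂ μ (row (n₂ - k)) := by
  intro n₁ n₂ hμ₁ hμ₂ _ _ hk₁ hk₂ ν₁ ν₂ hν₁ hν₂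
  rw [Hformula, Hformula]
  refine finsum_congr fun π => finsum_congr fun α => ?_
  rw [finsum_finsum_ite_iterLR_mul Hdeg, finsum_finsum_ite_iterLR_mul Hdeg,
    hν₁.size_eq, hν₂.size_eq]
  refine finsum_congr fun k₂ => ?_
  by_cases hz : iterLR lr π α k₂ μ = 0
  · simp [hz]
  have hμsize := size_add_size_add_eq_of_iterLR_ne_zero Hdeg hz
  rw [hν₁.iterLR_sub_size Hdeg Hbracket π α (by omega),
    hν₂.iterLR_sub_size Hdeg Hbracket π α (by omega)]
  exact if_congr (by omega) rfl rfl
end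

section
/- For partitions λ, μ and k ∈ ℕ with |λ| > |μ|, the reduced Kronecker coefficient ḡ_{λ[n], μ, (n−k)} equals 0 for all valid n. -/
lemma exists_ne_zero_of_finsum_ne_zero {α M : Type*} [AddCommMonoid M] {f : α → M}
    (h : ∑ᶠ x, f x ≠ 0) : ∃ x, f x ≠ 0 := by
  by_contra! hf
  exact h (finsum_eq_zero_of_forall_eq_zero hf)

namespace KPartition

lemma size_eq_sum_range_s6 (l : KPartition) {N : ℕ} (hN : ∀ i, N ≤ i → l.parts i = 0) :
    l.size = ∑ i ∈ Finset.range N, l.parts i := by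
  refine finsum_eq_finsetSum_of_support_subset _ fun i hi => ?_
  simp only [Finset.coe_range, Set.mem_Iio]
  by_contra h
  exact hi (hN i (not_lt.mp h))

lemma size_le_size_of_subdiag {l m : KPartition} (h : Subdiag l m) : l.size ≤ m.size := by
  obtain ⟨N₁, h₁⟩ := l.eventually_zero
  obtain ⟨N₂, h₂⟩ := m.eventually_zero
  rw [l.size_eq_sum_range_s6 fun i hi => h₁ i ((le_max_left _ _).trans hi),
    m.size_eq_sum_range_s6 fun i hi => h₂ i ((le_max_right N₁ N₂).trans hi)]
  exact Finset.sum_le_sum fun i _ => h i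

lemma pieri_ne_zero_iff {l : KPartition} {m : ℕ} {ν : KPartition} :
    pieri l m ν ≠ 0 ↔ IsHorizontalStrip l ν ∧ ν.size = l.size + m := by
  unfold pieri
  split_ifs with h <;> simp [h]

lemma IsPad.subdiag_of_isHorizontalStrip {l ν ξ : KPartition} {n : ℕ} (hpad : IsPad l n ν)
    (hξ : IsHorizontalStrip ξ ν) : Subdiag l ξ :=
  fun i => hpad.2 i ▸ hξ.2 i

section iterLR

variable {lr : KPartition → KPartition → KPartition → ℕ}
  (Hdeg : ∀ a b c : KPartition, lr a b c ≠ 0 → a.size + b.size = c.size)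
  {π α : KPartition} {k : ℕ}

include Hdeg

lemma size_add_size_le_of_iterLR_ne_zero {a : KPartition} (h : iterLR lr π α k a ≠ 0) :
    π.size + α.size ≤ a.size := by
  obtain ⟨ξ, hξ⟩ := exists_ne_zero_of_finsum_ne_zero h
  obtain ⟨hlr, hpieri⟩ := mul_ne_zero_iff.mp hξ
  have hπξ := Hdeg _ _ _ hlr
  have hαξ := (pieri_ne_zero_iff.mp hpieri).2
  omega

lemma size_le_size_add_size_of_iterLR_pad_ne_zero
    (Hbracket : ∀ (π α : KPartition) (k : ℕ) (a : KPartition),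
      iterLR lr π α k a = ∑ᶠ ξ : KPartition, pieri ξ k a * lr π α ξ)
    {l ν : KPartition} {n : ℕ} (hpad : IsPad l n ν) (h : iterLR lr π α k ν ≠ 0) :
    l.size ≤ π.size + α.size := by
  rw [Hbracket] at h
  obtain ⟨ξ, hξ⟩ := exists_ne_zero_of_finsum_ne_zero h
  obtain ⟨hpieri, hlr⟩ := mul_ne_zero_iff.mp hξ
  rw [Hdeg _ _ _ hlr]
  exact size_le_size_of_subdiag (hpad.subdiag_of_isHorizontalStrip (pieri_ne_zero_iff.mp hpieri).1)

end iterLR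

end KPartition

open KPartition in
/-- `gbar` stands for the reduced Kronecker coefficient and `lr` for the Littlewood–Richardson
coefficient, characterised only by the properties the Bowman–De Visscher–Orellana formula needs. -/
theorem stmt6 (gbar lr : KPartition → KPartition → KPartition → ℕ)
    (Hdeg : ∀ a b c : KPartition, lr a b c ≠ 0 → a.size + b.size = c.size)
    (Hbracket : ∀ (π α : KPartition) (k : ℕ) (a : KPartition),
      iterLR lr π α k a = ∑ᶠ ξ : KPartition, pieri ξ k a * lr π α ξ)
    (Hformula : ∀ (a b : KPartition) (k : ℕ),
      gbar a b (row k) =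
        ∑ᶠ π : KPartition, ∑ᶠ α : KPartition, ∑ᶠ k₁ : ℕ, ∑ᶠ k₂ : ℕ,
          (if k₁ + k₂ + π.size = k then
            iterLR lr π α k₁ a * iterLR lr π α k₂ b else 0))
    (l μ : KPartition) (k : ℕ) (hsize : μ.size < l.size) :
    ∀ n : ℕ, l.size + l.parts 0 ≤ n → k ≤ n →
      ∀ ν : KPartition, IsPad l n ν →
        gbar ν μ (row (n - k)) = 0 := by
  intro n _ _ ν hpad
  have hterm : ∀ (π α : KPartition) (k₁ k₂ : ℕ),
      iterLR lr π α k₁ ν * iterLR lr π α k₂ μ = 0 := by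
    intro π α k₁ k₂
    by_contra hne
    obtain ⟨hν, hμ⟩ := mul_ne_zero_iff.mp hne
    have hlower := size_le_size_add_size_of_iterLR_pad_ne_zero Hdeg Hbracket hpad hν
    have hupper := size_add_size_le_of_iterLR_ne_zero Hdeg hμ
    omega
  simp only [Hformula, hterm, ite_self, finsum_zero]
end
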